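/- Define Φ : M₂⊗M₂ → M₂ by Φ(X) = ⟨φ₋| (id⊗T)(X) |φ₋⟩ · I, where |φ₋⟩ = (|01⟩ − |10⟩)/√2 is the singlet vector and T is the transpose map in the z-basis on the second factor. Then: (i) for all positive semidefinite 2×2 matrices A, B, the matrix Φ(A⊗B) is positive semidefinite; (ii) for |φ₊⟩ = (|00⟩ + |11⟩)/√2, Φ(|φ₊⟩⟨φ₊|) = −I/2, which is not positive semidefinite. In particular Φ maps the min-tensor positive cone to positive semidefinite matrices but is not completely positive. -/

import Mathlib

open Matrix Kronecker
open scoped ComplexOrder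

noncomputable section

/-- 2×2 complex matrices. -/
abbrev M2 : Type := Matrix (Fin 2) (Fin 2) ℂ

/-- 4×4 complex matrices, identified with `M2 ⊗ M2` via the Kronecker product. -/
abbrev M4 : Type := Matrix (Fin 2 × Fin 2) (Fin 2 × Fin 2) ℂ

/-- The singlet vector `|φ₋⟩ = (|01⟩ - |10⟩)/√2`. -/
def phiMinus : Fin 2 × Fin 2 → ℂ := fun p =>
  if p = ((0 : Fin 2), (1 : Fin 2)) then (((Real.sqrt 2)⁻¹ : ℝ) : ℂ)
  else if p = ((1 : Fin 2), (0 : Fin 2)) then -(((Real.sqrt 2)⁻¹ : ℝ) : ℂ) else 0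

/-- The vector `|φ₊⟩ = (|00⟩ + |11⟩)/√2`. -/
def phiPlus : Fin 2 × Fin 2 → ℂ := fun p =>
  if p = ((0 : Fin 2), (0 : Fin 2)) then (((Real.sqrt 2)⁻¹ : ℝ) : ℂ)
  else if p = ((1 : Fin 2), (1 : Fin 2)) then (((Real.sqrt 2)⁻¹ : ℝ) : ℂ) else 0

/-- The partial transpose `id ⊗ T` (entrywise transpose of the second tensor factor,
in the z-basis), sending `A ⊗ B` to `A ⊗ Bᵀ`. -/
def partialT (X : M4) : M4 := fun p q => X (p.1, q.2) (q.1, p.2)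

/-- The map `Φ(X) = ⟨φ₋| (id ⊗ T)(X) |φ₋⟩ · I`. -/
def Phi (X : M4) : M2 := (star phiMinus ⬝ᵥ (partialT X *ᵥ phiMinus)) • (1 : M2)

/-- The Choi matrix `Σ_{i,j} E_{ij} ⊗ Φ(E_{ij})` of a map `Φ : M2 ⊗ M2 → M2`,
where `E_{ij}` are the matrix units of `M2 ⊗ M2`. -/
def choiFun (Φ : M4 → M2) : Matrix ((Fin 2 × Fin 2) × Fin 2) ((Fin 2 × Fin 2) × Fin 2) ℂ :=
  ∑ i : Fin 2 × Fin 2, ∑ j : Fin 2 × Fin 2,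
    (Matrix.single i j (1 : ℂ)) ⊗ₖ Φ (Matrix.single i j (1 : ℂ))


lemma kron_psd {A B : M2} (hA : A.PosSemidef) (hB : B.PosSemidef) : (A ⊗ₖ B).PosSemidef := by
  obtain ⟨C, rfl⟩ : ∃ C : M2, A = Cᴴ * C := by
    open scoped MatrixOrder in
    obtain ⟨C, hC⟩ := CStarAlgebra.nonneg_iff_eq_star_mul_self.mp hA.nonneg
    exact ⟨C, hC⟩
  obtain ⟨D, rfl⟩ : ∃ D : M2, B = Dᴴ * D := by
    open scoped MatrixOrder in
    obtain ⟨D, hD⟩ := CStarAlgebra.nonneg_iff_eq_star_mul_self.mp hB.nonneg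
    exact ⟨D, hD⟩
  rw [Matrix.mul_kronecker_mul]
  have h : Cᴴ ⊗ₖ Dᴴ = (C ⊗ₖ D)ᴴ := by
    ext ⟨p1, p2⟩ ⟨q1, q2⟩
    simp [Matrix.conjTranspose_apply, star_mul']
  rw [h]
  exact Matrix.posSemidef_conjTranspose_mul_self _

lemma smul_one_psd {c : ℂ} (hc : 0 ≤ c) : (c • (1 : M2)).PosSemidef := by
  refine Matrix.PosSemidef.of_dotProduct_mulVec_nonneg ?_ ?_
  · have hsc : star c = c := by
      rw [Complex.star_def, Complex.conj_eq_iff_im]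
      exact ((Complex.le_def.mp hc).2).symm
    rw [Matrix.IsHermitian, Matrix.conjTranspose_smul, Matrix.conjTranspose_one, hsc]
  · intro x
    rw [Matrix.smul_mulVec, Matrix.one_mulVec, dotProduct_smul, smul_eq_mul]
    exact mul_nonneg hc (dotProduct_star_self_nonneg x)

lemma partialT_kron (A B : M2) : partialT (A ⊗ₖ B) = A ⊗ₖ Bᵀ := by
  ext ⟨p1, p2⟩ ⟨q1, q2⟩
  rfl

lemma inv_sqrt2_sq : (((Real.sqrt 2)⁻¹ : ℝ) : ℂ) * (((Real.sqrt 2)⁻¹ : ℝ) : ℂ) = 1 / 2 := by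
  rw [← Complex.ofReal_mul, ← mul_inv, Real.mul_self_sqrt (by norm_num)]
  norm_num

lemma phi_plus_eq : Phi (Matrix.vecMulVec phiPlus (star phiPlus)) = (-(1 / 2) : ℂ) • (1 : M2) := by
  rw [Phi]
  congr 1
  simp only [dotProduct, mulVec, partialT, Matrix.vecMulVec_apply, Fintype.sum_prod_type,
    Fin.sum_univ_two, phiMinus, phiPlus, Pi.star_apply]
  norm_num [Prod.ext_iff, Complex.star_def]
  have hx : ((Real.sqrt 2 : ℝ) : ℂ) ^ 4 = 4 := by
    rw [← Complex.ofReal_pow]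
    have : Real.sqrt 2 ^ 4 = (Real.sqrt 2 ^ 2) ^ 2 := by ring
    rw [this, Real.sq_sqrt (by norm_num)]
    norm_num
  ring_nf
  rw [inv_pow, hx]
  norm_num

lemma stdBasis_apply (i j a b : Fin 2 × Fin 2) :
    Matrix.single i j (1 : ℂ) a b = if i = a ∧ j = b then 1 else 0 := rfl

lemma phi_std (i j : Fin 2 × Fin 2) :
    Phi (Matrix.single i j 1) =
      (star (phiMinus (i.1, j.2)) * phiMinus (j.1, i.2)) • (1 : M2) := by
  rw [Phi]
  congr 1
  calc star phiMinus ⬝ᵥ (partialT (Matrix.single i j 1) *ᵥ phiMinus)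
      = ∑ p : Fin 2 × Fin 2, ∑ q : Fin 2 × Fin 2, star (phiMinus p) *
          ((if (p.1, q.2) = i ∧ (q.1, p.2) = j then 1 else 0) * phiMinus q) := by
        simp only [dotProduct, mulVec, partialT, stdBasis_apply, Pi.star_apply]
        refine Finset.sum_congr rfl fun p _ => ?_
        rw [Finset.mul_sum]
        refine Finset.sum_congr rfl fun q _ => ?_
        congr 2
        simp [eq_comm]
    _ = star (phiMinus (i.1, j.2)) * phiMinus (j.1, i.2) := by
        obtain ⟨a, b⟩ := i
        obtain ⟨c, d⟩ := j
        simp only [Fintype.sum_prod_type, Fin.sum_univ_two, Prod.mk.injEq]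
        fin_cases a <;> fin_cases b <;> fin_cases c <;> fin_cases d <;>
          norm_num

lemma choi_apply (p q : (Fin 2 × Fin 2) × Fin 2) :
    choiFun Phi p q =
      star (phiMinus (p.1.1, q.1.2)) * phiMinus (q.1.1, p.1.2) * (1 : M2) p.2 q.2 := by
  rw [choiFun]
  simp only [Matrix.sum_apply, Matrix.kroneckerMap_apply, phi_std, Matrix.smul_apply,
    smul_eq_mul, stdBasis_apply, ite_and, ite_mul, zero_mul, one_mul,
    Finset.sum_ite_eq', Finset.mem_univ, if_true]
  rw [Finset.sum_eq_single p.1 (fun b _ hb => by simp [hb]) (by simp)]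
  simp

/-- `Φ` maps Kronecker products of positive semidefinite matrices to
positive semidefinite matrices, but `Φ(|φ₊⟩⟨φ₊|) = -I/2`, which is not positive
semidefinite; in particular `Φ` is not completely positive (its Choi matrix is not
positive semidefinite). -/
theorem phi_min_tensor_positive_not_cp :
    (∀ A B : M2, A.PosSemidef → B.PosSemidef → (Phi (A ⊗ₖ B)).PosSemidef) ∧
    Phi (Matrix.vecMulVec phiPlus (star phiPlus)) = (-(1 / 2) : ℂ) • (1 : M2) ∧
    ¬ (Phi (Matrix.vecMulVec phiPlus (star phiPlus))).PosSemidef ∧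
    ¬ (choiFun Phi).PosSemidef := by

  refine ⟨?_, phi_plus_eq, ?_, ?_⟩
  · intro A B hA hB
    rw [Phi, partialT_kron]
    exact smul_one_psd ((kron_psd hA hB.transpose).dotProduct_mulVec_nonneg phiMinus)
  · rw [phi_plus_eq]
    intro h
    have h2 := h.dotProduct_mulVec_nonneg (fun _ => 1)
    simp only [mulVec, dotProduct, Fin.sum_univ_two, Matrix.smul_apply, Matrix.one_apply,
      Pi.star_apply, star_one, smul_eq_mul] at h2
    norm_num at h2
  · intro h
    have h2 := h.dotProduct_mulVec_nonneg (fun p => if p.2 = 0 ∧ p.1.1 = p.1.2 then 1 else 0)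
    simp only [mulVec, dotProduct, Fintype.sum_prod_type, Fin.sum_univ_two, choi_apply,
      Pi.star_apply] at h2
    norm_num [phiMinus, Matrix.one_apply, Prod.ext_iff, Complex.star_def] at h2
    have key : (((Real.sqrt 2 : ℝ) : ℂ))⁻¹ * (((Real.sqrt 2 : ℝ) : ℂ))⁻¹ = 1 / 2 := by
      rw [← mul_inv, ← Complex.ofReal_mul, Real.mul_self_sqrt (by norm_num)]
      norm_num
    rw [key] at h2
    rw [Complex.le_def] at h2
    norm_num at h2
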